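/- arXiv:2308.09131 — 3 statements merged into one kernel-verified Lean document; each statement's English description precedes it below -/
import Mathlib

section
/- Assume that for every h ∈ G with h ≠ e, the unitary U_S(h) is not a complex scalar multiple of the identity 1_n. Let A be a G×G complex matrix and fix frame orientations g_i, g_j ∈ G. Then Tr(Tr_S(𝐔 ρ 𝐔†) · P A P†) = Tr(Tr_S(ρ) · A) for every density matrix ρ on ℂ^G ⊗ ℂ^n, where P = P^{g_i,g_j} is the parity-swap unitary, if and only if A is diagonal in the group basis, i.e. ⟨g|A|g'⟩ = 0 whenever g ≠ g'. -/
/-! With `k = gi * gj`, both `Pswap gi gj` and `Uqrf U gi gj` are monomial: `Pswap` sends `|b⟩` to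
`|k / b⟩`, and `Uqrf` sends `|b⟩ ⊗ ψ` to `|a⟩ ⊗ U (a / gi) ψ` with `a = k / b`. By cyclicity of the
trace, `Tr (Tr_S (𝐔 ρ 𝐔†) B) = Tr (ρ 𝐔† (B ⊗ 1) 𝐔)`, and for `B = P A P†` the two reflections
cancel, so `𝐔† (B ⊗ 1) 𝐔` has `(y, x)` block `A y x • U (y / x)`. Density matrices separate
complex matrices (by polarization), so invariance means this block matrix is `A ⊗ 1`, i.e.
`A y x • (U (y / x) - 1) = 0`; as `U h ≠ 1` for `h ≠ 1`, `A` must be diagonal. -/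

open Matrix Kronecker
open scoped ComplexOrder

variable {G : Type*} [Fintype G] [CommGroup G] [DecidableEq G] {n : ℕ}

/-- The QRF-transformation unitary `𝐔^{g_i,g_j} = Σ_g |g g_i⟩⟨g_j g⁻¹| ⊗ U_S(g)`. -/
noncomputable def Uqrf (U : G →* Matrix.unitaryGroup (Fin n) ℂ) (gi gj : G) :
    Matrix (G × Fin n) (G × Fin n) ℂ :=
  ∑ g : G, Matrix.single (g * gi) (gj * g⁻¹) (1 : ℂ) ⊗ₖ
    (U g : Matrix (Fin n) (Fin n) ℂ)

/-- The partial trace over the system factor `ℂ^n`. -/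
noncomputable def trS (ρ : Matrix (G × Fin n) (G × Fin n) ℂ) : Matrix G G ℂ :=
  Matrix.of fun a b => ∑ s : Fin n, ρ (a, s) (b, s)

/-- The parity-swap unitary `P^{g_i,g_j} = Σ_g |g_i g⟩⟨g_j g⁻¹|` on `ℂ^G`. -/
noncomputable def Pswap (gi gj : G) : Matrix G G ℂ :=
  ∑ g : G, Matrix.single (gi * g) (gj * g⁻¹) (1 : ℂ)

theorem Matrix.eq_zero_of_forall_star_dotProduct_mulVec_eq_zero {ι : Type*} [Fintype ι]
    [DecidableEq ι] {X : Matrix ι ι ℂ} (h : ∀ w : ι → ℂ, star w ⬝ᵥ X *ᵥ w = 0) : X = 0 := by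
  have hT : toLpLin 2 2 X = (0 : EuclideanSpace ℂ ι →ₗ[ℂ] EuclideanSpace ℂ ι) := by
    refine (inner_map_self_eq_zero _).1 fun x => ?_
    rw [← inner_conj_symm, EuclideanSpace.inner_eq_star_dotProduct, ofLp_toLpLin, toLin'_apply,
      dotProduct_comm, h, map_zero]
  exact (toLpLin 2 2).injective (hT.trans (map_zero _).symm)

theorem Matrix.forall_density_trace_mul_eq_iff {ι : Type*} [Fintype ι] [DecidableEq ι]
    {X Y : Matrix ι ι ℂ} :
    (∀ ρ : Matrix ι ι ℂ, ρ.PosSemidef → ρ.trace = 1 → (ρ * X).trace = (ρ * Y).trace) ↔ X = Y := by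
  refine ⟨fun h => ?_, fun h _ _ _ => h ▸ rfl⟩
  rw [← sub_eq_zero]
  refine eq_zero_of_forall_star_dotProduct_mulVec_eq_zero fun w => ?_
  obtain rfl | hw := eq_or_ne w 0
  · simp
  have hc : star w ⬝ᵥ w ≠ 0 := fun h0 => hw (dotProduct_star_self_eq_zero.1 h0)
  have hρ := h ((star w ⬝ᵥ w)⁻¹ • vecMulVec w (star w))
    ((posSemidef_vecMulVec_self_star w).smul (inv_nonneg.2 (dotProduct_star_self_nonneg w)))
    (by rw [trace_smul, trace_vecMulVec, dotProduct_comm w, smul_eq_mul, inv_mul_cancel₀ hc])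
  simp only [smul_mul, trace_smul, vecMulVec_mul, trace_vecMulVec, smul_eq_mul,
    mul_right_inj' (inv_ne_zero hc)] at hρ
  rw [sub_mulVec, dotProduct_sub, sub_eq_zero, dotProduct_mulVec, dotProduct_mulVec,
    dotProduct_comm, hρ, dotProduct_comm]

theorem mul_eq_and_mul_inv_eq_iff {H : Type*} [CommGroup H] {x y g a b : H} :
    (g * x = a ∧ y * g⁻¹ = b) ↔ (g = a / x ∧ b = x * y / a) := by
  constructor
  · rintro ⟨rfl, rfl⟩
    exact ⟨(mul_div_cancel_right g x).symm,
      by rw [mul_comm g x, mul_div_mul_left_eq_div, div_eq_mul_inv]⟩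
  · rintro ⟨rfl, rfl⟩
    exact ⟨div_mul_cancel a x, by rw [inv_div, mul_div_assoc', mul_comm]⟩

theorem Pswap_apply (gi gj a b : G) :
    Pswap gi gj a b = if b = gi * gj / a then 1 else 0 := by
  simp only [Pswap, Matrix.sum_apply, single_apply, mul_comm gi, mul_eq_and_mul_inv_eq_iff,
    ite_and, Finset.sum_ite_eq', Finset.mem_univ, if_true]

theorem Uqrf_apply (U : G →* unitaryGroup (Fin n) ℂ) (gi gj : G) (p q : G × Fin n) :
    Uqrf U gi gj p q =
      if q.1 = gi * gj / p.1 then (U (p.1 / gi) : Matrix (Fin n) (Fin n) ℂ) p.2 q.2 else 0 := by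
  simp only [Uqrf, Matrix.sum_apply, kroneckerMap_apply, single_apply, mul_eq_and_mul_inv_eq_iff,
    ite_and, ite_mul, one_mul, zero_mul, Finset.sum_ite_eq', Finset.mem_univ, if_true]

theorem Pswap_mul_mul_conjTranspose_apply (gi gj : G) (A : Matrix G G ℂ) (a b : G) :
    (Pswap gi gj * A * (Pswap gi gj)ᴴ) a b = A (gi * gj / a) (gi * gj / b) := by
  simp [mul_apply, Pswap_apply, Finset.sum_ite_eq']

theorem coe_conjTranspose_mul_coe {H m : Type*} [Group H] [Fintype m] [DecidableEq m]
    (U : H →* unitaryGroup m ℂ) (a b : H) :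
    (U a : Matrix m m ℂ)ᴴ * U b = U (a⁻¹ * b) := by
  rw [← star_eq_conjTranspose, ← UnitaryGroup.inv_val, ← UnitaryGroup.mul_val, ← map_inv,
    ← map_mul]

theorem Uqrf_conjTranspose_mul_kronecker_one_mul_apply (U : G →* unitaryGroup (Fin n) ℂ)
    (gi gj : G) (B : Matrix G G ℂ) (y x : G) (v u : Fin n) :
    ((Uqrf U gi gj)ᴴ * (B ⊗ₖ (1 : Matrix (Fin n) (Fin n) ℂ)) * Uqrf U gi gj) (y, v) (x, u) =
      B (gi * gj / y) (gi * gj / x) * (U (y / x) : Matrix (Fin n) (Fin n) ℂ) v u := by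
  have hσ : ∀ z a : G, z = gi * gj / a ↔ a = gi * gj / z := fun z a => by
    rw [eq_div_iff_mul_eq', eq_div_iff_mul_eq', mul_comm]
  have hU : y / x = (gi * gj / y / gi)⁻¹ * (gi * gj / x / gi) := by
    rw [inv_mul_eq_div, div_div_div_cancel_right, div_div_div_cancel_left]
  simp only [mul_apply, Uqrf_apply, Fintype.sum_prod_type, kroneckerMap_apply, one_apply,
    conjTranspose_apply, apply_ite star, star_zero, hσ y, hσ x, ite_mul, mul_ite, zero_mul,
    mul_zero, mul_one, Finset.sum_ite_irrel, Finset.sum_const_zero, Finset.sum_ite_eq',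
    Finset.mem_univ, if_true]
  rw [hU, ← coe_conjTranspose_mul_coe, mul_apply, Finset.mul_sum]
  simp only [conjTranspose_apply]
  exact Finset.sum_congr rfl fun s _ => by ring

theorem trace_trS_mul {ι : Type*} [Fintype ι] (ρ : Matrix (ι × Fin n) (ι × Fin n) ℂ)
    (B : Matrix ι ι ℂ) :
    (trS ρ * B).trace = (ρ * (B ⊗ₖ (1 : Matrix (Fin n) (Fin n) ℂ))).trace := by
  simp only [trace, diag, mul_apply, trS, of_apply, Fintype.sum_prod_type, kroneckerMap_apply,
    one_apply, mul_ite, mul_one, mul_zero, Finset.sum_ite_eq', Finset.mem_univ, if_true,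
    Finset.sum_mul]
  exact Finset.sum_congr rfl fun _ _ => Finset.sum_comm

theorem trace_trS_conj_mul {ι : Type*} [Fintype ι] (W ρ : Matrix (ι × Fin n) (ι × Fin n) ℂ)
    (B : Matrix ι ι ℂ) :
    (trS (W * ρ * Wᴴ) * B).trace =
      (ρ * (Wᴴ * (B ⊗ₖ (1 : Matrix (Fin n) (Fin n) ℂ)) * W)).trace := by
  rw [trace_trS_mul, Matrix.mul_assoc W, Matrix.mul_assoc W, trace_mul_comm W]
  simp only [Matrix.mul_assoc]

theorem Uqrf_conj_eq_kronecker_one_iff (U : G →* unitaryGroup (Fin n) ℂ)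
    (hU : ∀ h : G, h ≠ 1 → (U h : Matrix (Fin n) (Fin n) ℂ) ≠ 1) (gi gj : G) (A : Matrix G G ℂ) :
    (Uqrf U gi gj)ᴴ * ((Pswap gi gj * A * (Pswap gi gj)ᴴ) ⊗ₖ (1 : Matrix (Fin n) (Fin n) ℂ)) *
        Uqrf U gi gj = A ⊗ₖ 1 ↔ ∀ g g' : G, g ≠ g' → A g g' = 0 := by
  simp only [← Matrix.ext_iff, Prod.forall, Uqrf_conjTranspose_mul_kronecker_one_mul_apply,
    Pswap_mul_mul_conjTranspose_apply, div_div_cancel, kroneckerMap_apply]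
  constructor
  · intro h g g' hgg'
    obtain ⟨v, u, hvu⟩ :
        ∃ v u, (U (g / g') : Matrix (Fin n) (Fin n) ℂ) v u ≠ (1 : Matrix _ _ ℂ) v u := by
      by_contra! hall
      exact hU _ (div_ne_one.2 hgg') (Matrix.ext hall)
    by_contra hA
    exact hvu (mul_left_cancel₀ hA (h g v g' u))
  · intro hA y v x u
    obtain rfl | hyx := eq_or_ne y x
    · rw [div_self', map_one, UnitaryGroup.one_val]
    · rw [hA y x hyx, zero_mul, zero_mul]

theorem frame_averages_invariant_iff_general
    (U : G →* Matrix.unitaryGroup (Fin n) ℂ)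
    (hU : ∀ h : G, h ≠ 1 →
      ¬ ∃ c : ℂ, (U h : Matrix (Fin n) (Fin n) ℂ) = c • (1 : Matrix (Fin n) (Fin n) ℂ))
    (gi gj : G) (A : Matrix G G ℂ) :
    (∀ ρ : Matrix (G × Fin n) (G × Fin n) ℂ, ρ.PosSemidef → ρ.trace = 1 →
        (trS (Uqrf U gi gj * ρ * (Uqrf U gi gj)ᴴ) *
            (Pswap gi gj * A * (Pswap gi gj)ᴴ)).trace = (trS ρ * A).trace) ↔
      (∀ g g' : G, g ≠ g' → A g g' = 0) := by
  have hU' : ∀ h : G, h ≠ 1 → (U h : Matrix (Fin n) (Fin n) ℂ) ≠ 1 :=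
    fun h hh hU1 => hU h hh ⟨1, by rw [hU1, one_smul]⟩
  simp_rw [trace_trS_conj_mul, trace_trS_mul]
  rw [forall_density_trace_mul_eq_iff, Uqrf_conj_eq_kronecker_one_iff U hU']

/-- QRF-invariant frame observable averages. Assuming no nontrivial
translation acts as a scalar, the expectation value of a frame observable `A` in the
reduced frame state agrees with the parity-swapped expectation in the other QRF
perspective for every global density matrix iff `A` is diagonal in the group basis. -/
theorem frame_averages_invariant_iff (hn : 1 ≤ n)
    (U : G →* Matrix.unitaryGroup (Fin n) ℂ)
    (hU : ∀ h : G, h ≠ 1 →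
      ¬ ∃ c : ℂ, (U h : Matrix (Fin n) (Fin n) ℂ) = c • (1 : Matrix (Fin n) (Fin n) ℂ))
    (gi gj : G) (A : Matrix G G ℂ) :
    (∀ ρ : Matrix (G × Fin n) (G × Fin n) ℂ, ρ.PosSemidef → ρ.trace = 1 →
        (trS (Uqrf U gi gj * ρ * (Uqrf U gi gj)ᴴ) *
            (Pswap gi gj * A * (Pswap gi gj)ᴴ)).trace = (trS ρ * A).trace) ↔
      (∀ g g' : G, g ≠ g' → A g g' = 0) :=
  frame_averages_invariant_iff_general U hU gi gj A
end

section
/- Let H be a Hermitian matrix on ℂ^G ⊗ ℂ^n, let ρ₀ be a density matrix on ℂ^G ⊗ ℂ^n, fix frame orientations g_i, g_j ∈ G, a bilocal unitary X = Y ⊗ Z, and real numbers t₀ < t₁. Define the trajectory ρ(t) := exp(−i(t−t₀)H) ρ₀ exp(i(t−t₀)H) (matrix exponentials) and the imported Hamiltonian H' := X (𝐔 H 𝐔†) X†. Then ρ(t) ∈ 𝒜^X for all t ∈ [t₀, t₁] if and only if both ρ₀ ∈ 𝒜^X and [H − H', ρ(t)] = 0 for all t ∈ [t₀, t₁]. 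-/
/-!
Put `V = X 𝐔`. Since `X` is unitary, `f ∈ 𝒜^X` iff `V f V† = f`, and `V ρ(t) V†` is the
trajectory of `H' = V H V†` starting at `V ρ₀ V†`. Hence `ρ(t) ∈ 𝒜^X` on `[t₀, t₁]` iff
`ρ₀` is fixed by `V` and the `H`- and `H'`-trajectories of `ρ₀` agree on `[t₀, t₁]`.
If they agree, so do their derivatives `i[ρ, H]` and `i[ρ, H']`, i.e. `[H - H', ρ] = 0`.
Conversely, if this commutator vanishes, `e^{i(t-t₀)H'} ρ(t) e^{-i(t-t₀)H'}` has zero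
derivative, so it stays equal to `ρ₀`.
-/

open Matrix Kronecker
open scoped ComplexOrder

variable {G : Type*} [Fintype G] [CommGroup G] [DecidableEq G] {n : ℕ}

/-- The set `𝒜^X = { f : 𝐔 f 𝐔† = X† f X }` with `X = Y ⊗ Z`. -/
def AX (U : G →* Matrix.unitaryGroup (Fin n) ℂ) (gi gj : G)
    (Y : Matrix G G ℂ) (Z : Matrix (Fin n) (Fin n) ℂ) :
    Set (Matrix (G × Fin n) (G × Fin n) ℂ) :=
  {f | Uqrf U gi gj * f * (Uqrf U gi gj)ᴴ = (Y ⊗ₖ Z)ᴴ * f * (Y ⊗ₖ Z)}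

/-- The Schrödinger trajectory `ρ(t) = e^{-i(t-t₀)H} ρ₀ e^{i(t-t₀)H}`. -/
noncomputable def traj (H ρ₀ : Matrix (G × Fin n) (G × Fin n) ℂ) (t₀ t : ℝ) :
    Matrix (G × Fin n) (G × Fin n) ℂ :=
  NormedSpace.exp ((-Complex.I * ((t : ℂ) - (t₀ : ℂ))) • H) * ρ₀ *
    NormedSpace.exp ((Complex.I * ((t : ℂ) - (t₀ : ℂ))) • H)

open NormedSpace Set

theorem commute_sub_iff_lie_eq {R : Type*} [Ring R] (a b x : R) :
    Commute (a - b) x ↔ ⁅x, a⁆ = ⁅x, b⁆ := by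
  rw [Commute.symm_iff, commute_iff_lie_eq, Ring.lie_def, Ring.lie_def, Ring.lie_def, mul_sub,
    sub_mul, sub_sub_sub_comm, sub_eq_zero]

theorem conj_eq_star_conj_iff {R : Type*} [Monoid R] [StarMul R] {X : R} (hX : X ∈ unitary R)
    (W f : R) : W * f * star W = star X * f * X ↔ X * W * f * star (X * W) = f := by
  have hXX (a : R) : X * (star X * a) = a := by
    rw [← mul_assoc, Unitary.mul_star_self_of_mem hX, one_mul]
  have hXX' (a : R) : star X * (X * a) = a := by
    rw [← mul_assoc, Unitary.star_mul_self_of_mem hX, one_mul]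
  rw [star_mul]
  constructor
  · intro h
    simp only [mul_assoc] at h ⊢
    rw [← mul_assoc f, ← mul_assoc W, h]
    simp only [mul_assoc, hXX, Unitary.mul_star_self_of_mem hX, mul_one]
  · intro h
    conv_rhs => rw [← h]
    simp only [mul_assoc, hXX', Unitary.star_mul_self_of_mem hX, mul_one]

section Trajectory

variable {m : Type*} [Fintype m] [DecidableEq m]

-- Matrices carry no global norm in Mathlib; any choice serves, as the main theorem involves none.
attribute [local instance] Matrix.linftyOpNormedRing Matrix.linftyOpNormedAlgebra

-- `traj` for an arbitrary finite index type; `traj` is definitionally a special case.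
noncomputable def trajectory (H ρ₀ : Matrix m m ℂ) (t₀ t : ℝ) : Matrix m m ℂ :=
  exp ((-Complex.I * ((t : ℂ) - (t₀ : ℂ))) • H) * ρ₀ *
    exp ((Complex.I * ((t : ℂ) - (t₀ : ℂ))) • H)

theorem trajectory_self (H ρ₀ : Matrix m m ℂ) (t₀ : ℝ) : trajectory H ρ₀ t₀ t₀ = ρ₀ := by
  simp [trajectory]

theorem exp_smul_sub_eq (c : ℂ) (A : Matrix m m ℂ) (t₀ s : ℝ) :
    exp ((c * ((s : ℂ) - (t₀ : ℂ))) • A) = exp ((s - t₀) • (c • A)) := by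
  rw [← smul_assoc, Complex.real_smul]
  push_cast
  ring_nf

theorem hasDerivAt_exp_smul_sub (c : ℂ) (A : Matrix m m ℂ) (t₀ t : ℝ) :
    HasDerivAt (fun s : ℝ => exp ((c * ((s : ℂ) - (t₀ : ℂ))) • A))
      (exp ((c * ((t : ℂ) - (t₀ : ℂ))) • A) * (c • A)) t := by
  have h := (hasDerivAt_exp_smul_const (c • A) (t - t₀)).scomp t ((hasDerivAt_id t).sub_const t₀)
  rw [one_smul] at h
  simp only [exp_smul_sub_eq]
  exact h

theorem hasDerivAt_exp_smul_sub' (c : ℂ) (A : Matrix m m ℂ) (t₀ t : ℝ) :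
    HasDerivAt (fun s : ℝ => exp ((c * ((s : ℂ) - (t₀ : ℂ))) • A))
      ((c • A) * exp ((c * ((t : ℂ) - (t₀ : ℂ))) • A)) t := by
  have h := (hasDerivAt_exp_smul_const' (c • A) (t - t₀)).scomp t ((hasDerivAt_id t).sub_const t₀)
  rw [one_smul] at h
  simp only [exp_smul_sub_eq]
  exact h

theorem hasDerivAt_exp_smul_sub_conj {M : ℝ → Matrix m m ℂ} {M' : Matrix m m ℂ} {t : ℝ}
    (hM : HasDerivAt M M' t) (c : ℂ) (A : Matrix m m ℂ) (t₀ : ℝ) :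
    HasDerivAt
      (fun s : ℝ => exp ((c * ((s : ℂ) - (t₀ : ℂ))) • A) * M s *
        exp ((-c * ((s : ℂ) - (t₀ : ℂ))) • A))
      (exp ((c * ((t : ℂ) - (t₀ : ℂ))) • A) * (M' + c • ⁅A, M t⁆) *
        exp ((-c * ((t : ℂ) - (t₀ : ℂ))) • A)) t := by
  refine (((hasDerivAt_exp_smul_sub c A t₀ t).mul hM).mul
    (hasDerivAt_exp_smul_sub' (-c) A t₀ t)).congr_deriv ?_
  simp only [Ring.lie_def, neg_smul, neg_mul, mul_neg, smul_mul_assoc, mul_smul_comm, add_mul,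
    mul_add, sub_mul, mul_sub, smul_sub, mul_assoc, Pi.mul_apply]
  abel

theorem hasDerivAt_trajectory (H ρ₀ : Matrix m m ℂ) (t₀ t : ℝ) :
    HasDerivAt (trajectory H ρ₀ t₀) (Complex.I • ⁅trajectory H ρ₀ t₀ t, H⁆) t := by
  have h := hasDerivAt_exp_smul_sub_conj (hasDerivAt_const t ρ₀) (-Complex.I) H t₀
  simp only [neg_neg, zero_add] at h
  refine h.congr_deriv ?_
  rw [trajectory]
  set Eneg := exp ((-Complex.I * ((t : ℂ) - (t₀ : ℂ))) • H)
  set Epos := exp ((Complex.I * ((t : ℂ) - (t₀ : ℂ))) • H)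
  have hEneg : Commute H Eneg := ((Commute.refl H).smul_right _).exp_right
  have hEpos : Commute H Epos := ((Commute.refl H).smul_right _).exp_right
  simp only [Ring.lie_def, neg_smul, neg_mul, mul_neg, smul_sub, sub_mul, mul_sub, smul_mul_assoc,
    mul_smul_comm, mul_assoc, hEneg.left_comm, hEpos.eq]
  abel

theorem Matrix.exp_neg_mul_exp (A : Matrix m m ℂ) : exp (-A) * exp A = 1 := by
  rw [← Matrix.exp_add_of_commute _ _ (Commute.refl A).neg_left, neg_add_cancel, exp_zero]

theorem Matrix.exp_smul_unitary_conj {V : Matrix m m ℂ} (hV : V ∈ unitaryGroup m ℂ) (c : ℂ)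
    (A : Matrix m m ℂ) : exp (c • (V * A * Vᴴ)) = V * exp (c • A) * Vᴴ := by
  rw [← smul_mul_assoc, ← mul_smul_comm]
  exact NormedSpace.exp_units_conj (Unitary.toUnits ⟨V, hV⟩) (c • A)

theorem unitary_conj_trajectory {V : Matrix m m ℂ} (hV : V ∈ unitaryGroup m ℂ)
    (H ρ₀ : Matrix m m ℂ) (t₀ t : ℝ) :
    V * trajectory H ρ₀ t₀ t * Vᴴ = trajectory (V * H * Vᴴ) (V * ρ₀ * Vᴴ) t₀ t := by
  have hVV (X : Matrix m m ℂ) : Vᴴ * (V * X) = X := by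
    rw [← mul_assoc, ← star_eq_conjTranspose, Unitary.star_mul_self_of_mem hV, one_mul]
  rw [trajectory, trajectory, exp_smul_unitary_conj hV, exp_smul_unitary_conj hV]
  simp only [mul_assoc, hVV]

theorem commute_of_trajectory_eqOn {H H' ρ₀ : Matrix m m ℂ} {t₀ t₁ : ℝ} (ht : t₀ < t₁)
    (h : EqOn (trajectory H ρ₀ t₀) (trajectory H' ρ₀ t₀) (Icc t₀ t₁)) :
    ∀ t ∈ Icc t₀ t₁, Commute (H - H') (trajectory H ρ₀ t₀ t) := by
  intro t htI
  have hH := (hasDerivAt_trajectory H ρ₀ t₀ t).hasDerivWithinAt (s := Icc t₀ t₁)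
  have hH' := (hasDerivAt_trajectory H' ρ₀ t₀ t).hasDerivWithinAt.congr
    (fun s hs => h hs) (h htI)
  have hderiv := (uniqueDiffOn_Icc ht t htI).eq_deriv _ hH hH'
  rw [← h htI] at hderiv
  exact (commute_sub_iff_lie_eq _ _ _).mpr (smul_right_injective _ Complex.I_ne_zero hderiv)

theorem trajectory_eqOn_of_commute {H H' ρ₀ : Matrix m m ℂ} {t₀ t₁ : ℝ}
    (h : ∀ t ∈ Icc t₀ t₁, Commute (H - H') (trajectory H ρ₀ t₀ t)) :
    EqOn (trajectory H ρ₀ t₀) (trajectory H' ρ₀ t₀) (Icc t₀ t₁) := by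
  intro t htI
  set F := fun s : ℝ => exp ((Complex.I * ((s : ℂ) - (t₀ : ℂ))) • H') * trajectory H ρ₀ t₀ s *
    exp ((-Complex.I * ((s : ℂ) - (t₀ : ℂ))) • H')
  have hF (s : ℝ) :=
    hasDerivAt_exp_smul_sub_conj (hasDerivAt_trajectory H ρ₀ t₀ s) Complex.I H' t₀
  have hF_const : F t = F t₀ := by
    refine constant_of_has_deriv_right_zero (fun s _ => (hF s).continuousAt.continuousWithinAt)
      (fun s hs => ?_) t htI
    convert (hF s).hasDerivWithinAt using 1
    rw [(commute_sub_iff_lie_eq _ _ _).mp (h s (Ico_subset_Icc_self hs)), ← smul_add,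
      Ring.lie_def, Ring.lie_def, sub_add_sub_cancel, sub_self, smul_zero, mul_zero, zero_mul]
  have hF_start : F t₀ = ρ₀ := by simp [F, trajectory_self]
  have hinv : exp ((-Complex.I * ((t : ℂ) - (t₀ : ℂ))) • H') *
      exp ((Complex.I * ((t : ℂ) - (t₀ : ℂ))) • H') = 1 := by
    rw [neg_mul, neg_smul, exp_neg_mul_exp]
  calc trajectory H ρ₀ t₀ t
      = exp ((-Complex.I * ((t : ℂ) - (t₀ : ℂ))) • H') * F t *
          exp ((Complex.I * ((t : ℂ) - (t₀ : ℂ))) • H') := by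
        simp only [F, ← mul_assoc, hinv, one_mul]
        simp only [mul_assoc, hinv, mul_one]
    _ = trajectory H' ρ₀ t₀ t := by rw [hF_const, hF_start, trajectory]

theorem unitary_conj_trajectory_invariant_iff {V H ρ₀ : Matrix m m ℂ}
    (hV : V ∈ unitaryGroup m ℂ) {t₀ t₁ : ℝ} (ht : t₀ < t₁) :
    (∀ t ∈ Icc t₀ t₁, V * trajectory H ρ₀ t₀ t * Vᴴ = trajectory H ρ₀ t₀ t) ↔
      V * ρ₀ * Vᴴ = ρ₀ ∧ ∀ t ∈ Icc t₀ t₁, Commute (H - V * H * Vᴴ) (trajectory H ρ₀ t₀ t) := by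
  constructor
  · intro h
    have hρ₀ : V * ρ₀ * Vᴴ = ρ₀ := by
      simpa only [trajectory_self] using h t₀ (left_mem_Icc.2 ht.le)
    refine ⟨hρ₀, commute_of_trajectory_eqOn ht fun t htI => ?_⟩
    rw [← h t htI, unitary_conj_trajectory hV, hρ₀]
  · rintro ⟨hρ₀, hcomm⟩ t htI
    rw [unitary_conj_trajectory hV, hρ₀]
    exact (trajectory_eqOn_of_commute hcomm htI).symm

end Trajectory

theorem Matrix.sum_kronecker {ι α l m p q : Type*} [NonUnitalNonAssocSemiring α] (s : Finset ι)
    (A : ι → Matrix l m α) (B : Matrix p q α) : ∑ i ∈ s, A i ⊗ₖ B = (∑ i ∈ s, A i) ⊗ₖ B := by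
  ext ⟨a, b⟩ ⟨c, d⟩
  simp [Matrix.sum_apply, Finset.sum_mul]

theorem Uqrf_mem_unitaryGroup (U : G →* Matrix.unitaryGroup (Fin n) ℂ) (gi gj : G) :
    Uqrf U gi gj ∈ unitaryGroup (G × Fin n) ℂ := by
  rw [mem_unitaryGroup_iff, star_eq_conjTranspose]
  have hterm (g h : G) :
      (single (g * gi) (gj * g⁻¹) (1 : ℂ) ⊗ₖ (U g : Matrix (Fin n) (Fin n) ℂ)) *
        (single (h * gi) (gj * h⁻¹) (1 : ℂ) ⊗ₖ (U h : Matrix (Fin n) (Fin n) ℂ))ᴴ =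
      if g = h then single (g * gi) (g * gi) 1 ⊗ₖ 1 else 0 := by
    rw [conjTranspose_kronecker, conjTranspose_single, ← mul_kronecker_mul]
    split_ifs with hgh
    · subst hgh
      rw [single_mul_single_same, star_one, mul_one, ← star_eq_conjTranspose,
        Unitary.mul_star_self_of_mem (U g).2]
    · rw [single_mul_single_of_ne (h := by simpa [eq_comm] using hgh), zero_kronecker]
  rw [Uqrf, conjTranspose_sum, Finset.sum_mul_sum]
  simp only [hterm, Finset.sum_ite_eq, Finset.mem_univ, if_true]
  rw [sum_kronecker, Fintype.sum_equiv (Equiv.mulRight gi)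
    (fun g => single (g * gi) (g * gi) (1 : ℂ)) (fun a => single a a 1) fun _ => rfl,
    sum_single_one, one_kronecker_one]

theorem mem_AX_iff {U : G →* Matrix.unitaryGroup (Fin n) ℂ} {gi gj : G} {Y : Matrix G G ℂ}
    {Z : Matrix (Fin n) (Fin n) ℂ} (hY : Y ∈ unitaryGroup G ℂ) (hZ : Z ∈ unitaryGroup (Fin n) ℂ)
    (f : Matrix (G × Fin n) (G × Fin n) ℂ) :
    f ∈ AX U gi gj Y Z ↔ (Y ⊗ₖ Z) * Uqrf U gi gj * f * ((Y ⊗ₖ Z) * Uqrf U gi gj)ᴴ = f :=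
  conj_eq_star_conj_iff (kronecker_mem_unitary hY hZ) _ _

theorem trajectory_in_AX_iff_general
    (U : G →* Matrix.unitaryGroup (Fin n) ℂ) (gi gj : G)
    (Y : Matrix G G ℂ) (hY : Y ∈ Matrix.unitaryGroup G ℂ)
    (Z : Matrix (Fin n) (Fin n) ℂ) (hZ : Z ∈ Matrix.unitaryGroup (Fin n) ℂ)
    (H : Matrix (G × Fin n) (G × Fin n) ℂ)
    (ρ₀ : Matrix (G × Fin n) (G × Fin n) ℂ)
    (t₀ t₁ : ℝ) (ht : t₀ < t₁) :
    (∀ t ∈ Set.Icc t₀ t₁, traj H ρ₀ t₀ t ∈ AX U gi gj Y Z) ↔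
      (ρ₀ ∈ AX U gi gj Y Z ∧
        ∀ t ∈ Set.Icc t₀ t₁,
          (H - (Y ⊗ₖ Z) * (Uqrf U gi gj * H * (Uqrf U gi gj)ᴴ) * (Y ⊗ₖ Z)ᴴ) *
              traj H ρ₀ t₀ t =
            traj H ρ₀ t₀ t *
              (H - (Y ⊗ₖ Z) * (Uqrf U gi gj * H * (Uqrf U gi gj)ᴴ) * (Y ⊗ₖ Z)ᴴ)) := by
  have hV := mul_mem (kronecker_mem_unitary hY hZ) (Uqrf_mem_unitaryGroup U gi gj)
  have hH' : (Y ⊗ₖ Z) * (Uqrf U gi gj * H * (Uqrf U gi gj)ᴴ) * (Y ⊗ₖ Z)ᴴ =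
      (Y ⊗ₖ Z) * Uqrf U gi gj * H * ((Y ⊗ₖ Z) * Uqrf U gi gj)ᴴ := by
    rw [conjTranspose_mul]
    simp only [mul_assoc]
  simp only [mem_AX_iff hY hZ, hH']
  exact unitary_conj_trajectory_invariant_iff hV ht

/-- TPS-invariant trajectories. The dynamical trajectory generated by a
Hermitian `H` stays in `𝒜^X` over `[t₀,t₁]` iff the initial state lies in `𝒜^X` and the
trajectory commutes with `H - H'`, where `H' = X (𝐔 H 𝐔†) X†` is the imported
Hamiltonian. -/
theorem trajectory_in_AX_iff (hn : 1 ≤ n)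
    (U : G →* Matrix.unitaryGroup (Fin n) ℂ) (gi gj : G)
    (Y : Matrix G G ℂ) (hY : Y ∈ Matrix.unitaryGroup G ℂ)
    (Z : Matrix (Fin n) (Fin n) ℂ) (hZ : Z ∈ Matrix.unitaryGroup (Fin n) ℂ)
    (H : Matrix (G × Fin n) (G × Fin n) ℂ) (hH : H.IsHermitian)
    (ρ₀ : Matrix (G × Fin n) (G × Fin n) ℂ)
    (hρ₀ : ρ₀.PosSemidef) (htr : ρ₀.trace = 1)
    (t₀ t₁ : ℝ) (ht : t₀ < t₁) :
    (∀ t ∈ Set.Icc t₀ t₁, traj H ρ₀ t₀ t ∈ AX U gi gj Y Z) ↔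
      (ρ₀ ∈ AX U gi gj Y Z ∧
        ∀ t ∈ Set.Icc t₀ t₁,
          (H - (Y ⊗ₖ Z) * (Uqrf U gi gj * H * (Uqrf U gi gj)ᴴ) * (Y ⊗ₖ Z)ᴴ) *
              traj H ρ₀ t₀ t =
            traj H ρ₀ t₀ t *
              (H - (Y ⊗ₖ Z) * (Uqrf U gi gj * H * (Uqrf U gi gj)ᴴ) * (Y ⊗ₖ Z)ᴴ)) :=
  trajectory_in_AX_iff_general U gi gj Y hY Z hZ H ρ₀ t₀ t₁ ht
end

section
/- Fix frame orientations g_i, g_j ∈ G and β ∈ ℝ. Let H be a Hermitian n×n matrix and suppose G is partitioned into disjoint subsets G = G_a ∪ G_c such that U_S(h) H = −H U_S(h) for all h ∈ G_a (anticommutation) and U_S(g) H = H U_S(g) for all g ∈ G_c (commutation). Let ρ_F be a density matrix on ℂ^G, set Z := Tr(exp(−βH)) and ρ := ρ_F ⊗ exp(−βH)/Z (the system is in a Gibbs state at inverse temperature β relative to frame R_i). Then the reduced system state in the other frame perspective is the mixture of Gibbs states of opposite inverse temperatures Tr_F(𝐔 ρ 𝐔†) = q · exp(+βH)/Z + (1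 − q) · exp(−βH)/Z, where q := Σ_{h∈G_a} ⟨g_j h⁻¹| ρ_F |g_j h⁻¹⟩. -/
/-!
Conjugating by `𝐔` sends `ρ_F ⊗ σ` to `Σ_g ⟨g_j g⁻¹|ρ_F|g_j g⁻¹⟩ U_S(g) σ U_S(g)†` after tracing
out the frame, because the frame parts `|g g_i⟩⟨g_j g⁻¹| ρ_F |g_j g'⁻¹⟩⟨g' g_i|` are traceless
for `g ≠ g'`. Conjugation by a unitary commutes with `exp`, and `U_S(g)` turns `-βH` into `βH`
for `g ∈ G_a` and fixes it otherwise, so the sum splits into the two Gibbs states with weights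
`q` and `Tr ρ_F - q = 1 - q`.
-/

open Matrix Kronecker
open scoped ComplexOrder

variable {G : Type*} [Fintype G] [CommGroup G] [DecidableEq G] {n : ℕ}

/-- The partial trace over the frame factor `ℂ^G`. -/
noncomputable def trF (ρ : Matrix (G × Fin n) (G × Fin n) ℂ) :
    Matrix (Fin n) (Fin n) ℂ :=
  Matrix.of fun s t => ∑ g : G, ρ (g, s) (g, t)

theorem trF_kronecker {K : Type*} [Fintype K] (X : Matrix K K ℂ)
    (Y : Matrix (Fin n) (Fin n) ℂ) :
    trF (X ⊗ₖ Y) = X.trace • Y := by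
  ext s t
  simp [trF, Matrix.trace, Finset.sum_mul, kroneckerMap_apply]

theorem trF_sum {K ι : Type*} [Fintype K] (s : Finset ι)
    (f : ι → Matrix (K × Fin n) (K × Fin n) ℂ) :
    trF (∑ i ∈ s, f i) = ∑ i ∈ s, trF (f i) := by
  ext a b
  simp only [trF, Matrix.sum_apply, Matrix.of_apply]
  exact Finset.sum_comm

theorem Uqrf_conjTranspose (U : G →* Matrix.unitaryGroup (Fin n) ℂ) (gi gj : G) :
    (Uqrf U gi gj)ᴴ =
      ∑ g : G, Matrix.single (gj * g⁻¹) (g * gi) (1 : ℂ) ⊗ₖ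
        (U g : Matrix (Fin n) (Fin n) ℂ)ᴴ := by
  simp [Uqrf, conjTranspose_sum, conjTranspose_kronecker, conjTranspose_single]

theorem trF_Uqrf_mul_kronecker_mul_conjTranspose (U : G →* Matrix.unitaryGroup (Fin n) ℂ)
    (gi gj : G) (A : Matrix G G ℂ) (B : Matrix (Fin n) (Fin n) ℂ) :
    trF (Uqrf U gi gj * (A ⊗ₖ B) * (Uqrf U gi gj)ᴴ) =
      ∑ g : G, A (gj * g⁻¹) (gj * g⁻¹) •
        ((U g : Matrix (Fin n) (Fin n) ℂ) * B * (U g : Matrix (Fin n) (Fin n) ℂ)ᴴ) := by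
  have frame_trace (g g' : G) :
      (Matrix.single (g * gi) (gj * g⁻¹) (1 : ℂ) * A *
        Matrix.single (gj * g'⁻¹) (g' * gi) 1).trace =
      if g' = g then A (gj * g⁻¹) (gj * g⁻¹) else 0 := by
    rw [single_mul_mul_single]
    by_cases h : g' = g
    · simp [h]
    · rw [trace_single_eq_of_ne _ _ _ fun h' => h (mul_right_cancel h').symm, if_neg h]
  rw [Uqrf_conjTranspose, Uqrf]
  simp only [Finset.sum_mul, Finset.mul_sum, trF_sum, ← mul_kronecker_mul, trF_kronecker,
    frame_trace, ite_smul, zero_smul, Finset.sum_ite_eq, Finset.mem_univ, if_true]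

theorem Matrix.unitary_mul_exp_mul_star {m 𝔸 : Type*} [Fintype m] [DecidableEq m]
    [NormedRing 𝔸] [NormedAlgebra ℚ 𝔸] [CompleteSpace 𝔸] [StarRing 𝔸]
    {u : Matrix m m 𝔸} (hu : u ∈ unitary (Matrix m m 𝔸)) {A B : Matrix m m 𝔸}
    (h : u * A = B * u) :
    u * NormedSpace.exp A * star u = NormedSpace.exp B := by
  have hconj : u * A * star u = B := by
    rw [h, mul_assoc, Unitary.mul_star_self_of_mem hu, mul_one]
  rw [← hconj]
  exact (Matrix.exp_units_conj (Unitary.toUnits ⟨u, hu⟩) A).symm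

theorem sum_diag_mul_inv_eq_trace {K : Type*} [Group K] [Fintype K] (ρ : Matrix K K ℂ)
    (g₀ : K) :
    ∑ g : K, ρ (g₀ * g⁻¹) (g₀ * g⁻¹) = ρ.trace :=
  Fintype.sum_equiv ((Equiv.inv K).trans (Equiv.mulLeft g₀)) _ _ fun _ => rfl

theorem gibbs_state_temperature_mixture_general
    (U : G →* Matrix.unitaryGroup (Fin n) ℂ) (gi gj : G) (β : ℝ)
    (H : Matrix (Fin n) (Fin n) ℂ)
    (Ga : Finset G)
    (hanti : ∀ h ∈ Ga,
      (U h : Matrix (Fin n) (Fin n) ℂ) * H = -(H * (U h : Matrix (Fin n) (Fin n) ℂ)))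
    (hcomm : ∀ g : G, g ∉ Ga →
      (U g : Matrix (Fin n) (Fin n) ℂ) * H = H * (U g : Matrix (Fin n) (Fin n) ℂ))
    (ρF : Matrix G G ℂ) (htrρF : ρF.trace = 1) :
    trF (Uqrf U gi gj *
          (ρF ⊗ₖ ((NormedSpace.exp ((-(β : ℂ)) • H)).trace⁻¹ •
            NormedSpace.exp ((-(β : ℂ)) • H))) *
          (Uqrf U gi gj)ᴴ) =
      (∑ h ∈ Ga, ρF (gj * h⁻¹) (gj * h⁻¹)) •
          ((NormedSpace.exp ((-(β : ℂ)) • H)).trace⁻¹ •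
            NormedSpace.exp ((β : ℂ) • H)) +
        (1 - ∑ h ∈ Ga, ρF (gj * h⁻¹) (gj * h⁻¹)) •
          ((NormedSpace.exp ((-(β : ℂ)) • H)).trace⁻¹ •
            NormedSpace.exp ((-(β : ℂ)) • H)) := by
  set q : G → ℂ := fun g => ρF (gj * g⁻¹) (gj * g⁻¹)
  have conj_gibbs (g : G) :
      (U g : Matrix (Fin n) (Fin n) ℂ) * NormedSpace.exp ((-(β : ℂ)) • H) *
          (U g : Matrix (Fin n) (Fin n) ℂ)ᴴ =
        if g ∈ Ga then NormedSpace.exp ((β : ℂ) • H)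
        else NormedSpace.exp ((-(β : ℂ)) • H) := by
    rw [← star_eq_conjTranspose]
    split_ifs with hg
    · refine unitary_mul_exp_mul_star (U g).2 ?_
      rw [Matrix.mul_smul, hanti g hg, Matrix.smul_mul, smul_neg, neg_smul, neg_neg]
    · refine unitary_mul_exp_mul_star (U g).2 ?_
      rw [Matrix.mul_smul, hcomm g hg, Matrix.smul_mul]
  have weights_compl : ∑ g ∈ Gaᶜ, q g = 1 - ∑ g ∈ Ga, q g := by
    rw [← htrρF, ← sum_diag_mul_inv_eq_trace ρF gj, ← Finset.sum_add_sum_compl Ga]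
    ring
  rw [trF_Uqrf_mul_kronecker_mul_conjTranspose]
  simp only [Matrix.mul_smul, Matrix.smul_mul, conj_gibbs, smul_ite,
    ← Finset.sum_add_sum_compl Ga]
  rw [Finset.sum_ite_of_true fun _ hg => hg,
    Finset.sum_ite_of_false fun _ hg => Finset.mem_compl.mp hg,
    ← Finset.sum_smul, ← Finset.sum_smul, weights_compl]

/-- QRF-relative temperature. If the system Hamiltonian `H`
anticommutes with the translations in `G_a` and commutes with those in its complement,
and the global state is `ρ_F ⊗ e^{-βH}/Z`, then the reduced system state in the other QRF
perspective is the mixture `q e^{+βH}/Z + (1-q) e^{-βH}/Z` of Gibbs states of opposite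
temperatures, with `q = Σ_{h∈G_a} ⟨g_j h⁻¹|ρ_F|g_j h⁻¹⟩`. -/
theorem gibbs_state_temperature_mixture (hn : 1 ≤ n)
    (U : G →* Matrix.unitaryGroup (Fin n) ℂ) (gi gj : G) (β : ℝ)
    (H : Matrix (Fin n) (Fin n) ℂ) (hH : H.IsHermitian)
    (Ga : Finset G)
    (hanti : ∀ h ∈ Ga,
      (U h : Matrix (Fin n) (Fin n) ℂ) * H = -(H * (U h : Matrix (Fin n) (Fin n) ℂ)))
    (hcomm : ∀ g : G, g ∉ Ga →
      (U g : Matrix (Fin n) (Fin n) ℂ) * H = H * (U g : Matrix (Fin n) (Fin n) ℂ))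
    (ρF : Matrix G G ℂ) (hρF : ρF.PosSemidef) (htrρF : ρF.trace = 1) :
    trF (Uqrf U gi gj *
          (ρF ⊗ₖ ((NormedSpace.exp ((-(β : ℂ)) • H)).trace⁻¹ •
            NormedSpace.exp ((-(β : ℂ)) • H))) *
          (Uqrf U gi gj)ᴴ) =
      (∑ h ∈ Ga, ρF (gj * h⁻¹) (gj * h⁻¹)) •
          ((NormedSpace.exp ((-(β : ℂ)) • H)).trace⁻¹ •
            NormedSpace.exp ((β : ℂ) • H)) +
        (1 - ∑ h ∈ Ga, ρF (gj * h⁻¹) (gj * h⁻¹)) •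
          ((NormedSpace.exp ((-(β : ℂ)) • H)).trace⁻¹ •
            NormedSpace.exp ((-(β : ℂ)) • H)) :=
  gibbs_state_temperature_mixture_general U gi gj β H Ga hanti hcomm ρF htrρF
end
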